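/- Let F be a temporal forest and let u, v, w be vertices such that w lies on the unique path between u and v in F. Then for any time t, LD(u, v, t) = LD(u, w, LD(w, v, t)), where LD(x, y, t) is the maximum departure time over all temporal paths from x to y arriving no later than t (with LD = −∞ if no such path exists, and LD(x, x, t) = t). -/

import Mathlib

open scoped Classical

/-- A temporal forest: an acyclic simple graph with a set of integer time labels
on each edge (given symmetrically). -/
structure TemporalForest (V : Type) where
  G : SimpleGraph V
  acyclic : G.IsAcyclic
  lab : V → V → Set ℤ
  symm : ∀ u v, lab u v = lab v u

/-- Embedding of `ℤ` into `EReal` (times range over `ℤ ∪ {−∞, +∞}`). -/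
def iE (n : ℤ) : EReal := ((n : ℝ) : EReal)

/-- `Journey F u v dep arr` : there is a temporal path from `u` to `v` in `F`
following the (unique) path from `u` to `v`, selecting a label on each edge,
with non-decreasing labels, departure time `dep` and arrival time `arr`. -/
def Journey {V : Type} (F : TemporalForest V) (u v : V) (dep arr : ℤ) : Prop :=
  ∃ (p : F.G.Walk u v) (L : List ℤ), p.IsPath ∧ L.length = p.length ∧
    List.Chain' (· ≤ ·) L ∧
    (∀ (i : ℕ) (h : i < L.length), L.get ⟨i, h⟩ ∈ F.lab (p.getVert i) (p.getVert (i+1))) ∧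
    L.head? = some dep ∧ L.getLast? = some arr

/-- Earliest arrival time of a temporal path from `u` to `v` departing no earlier
than `t`; `+∞` (`sInf ∅`) if no such path exists, and `EA u u t = t`. -/
noncomputable def EA {V : Type} (F : TemporalForest V) (u v : V) (t : EReal) : EReal :=
  if u = v then t
  else sInf {a : EReal | ∃ dep arr : ℤ, Journey F u v dep arr ∧ t ≤ iE dep ∧ a = iE arr}

/-- Latest departure time of a temporal path from `u` to `v` arriving no later
than `t`; `−∞` (`sSup ∅`) if no such path exists, and `LD u u t = t`. -/
noncomputable def LD {V : Type} (F : TemporalForest V) (u v : V) (t : EReal) : EReal :=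
  if u = v then t
  else sSup {d : EReal | ∃ dep arr : ℤ, Journey F u v dep arr ∧ iE arr ≤ t ∧ d = iE dep}

lemma iE_le_iE {a b : ℤ} : iE a ≤ iE b ↔ a ≤ b := by
  simp [iE, EReal.coe_le_coe_iff]

lemma walk_eq_of_isPath {V : Type} (F : TemporalForest V) {u v : V}
    {p q : F.G.Walk u v} (hp : p.IsPath) (hq : q.IsPath) : p = q := by
  have := F.acyclic.path_unique ⟨p, hp⟩ ⟨q, hq⟩
  exact congrArg Subtype.val this

lemma journey_trans {V : Type} {F : TemporalForest V} {u v w : V} {d₁ a₁ d₂ a₂ : ℤ}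
    (hw : ∃ p : F.G.Walk u v, p.IsPath ∧ w ∈ p.support)
    (h₁ : Journey F u w d₁ a₁) (h₂ : Journey F w v d₂ a₂) (hle : a₁ ≤ d₂) :
    Journey F u v d₁ a₂ := by
  obtain ⟨p, hp, hws⟩ := hw
  obtain ⟨p₁, L₁, hp₁, hl₁, hc₁, hlab₁, hh₁, hg₁⟩ := h₁
  obtain ⟨p₂, L₂, hp₂, hl₂, hc₂, hlab₂, hh₂, hg₂⟩ := h₂
  have hq₁ : p₁ = p.takeUntil w hws := walk_eq_of_isPath F hp₁ (hp.takeUntil hws)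
  have hq₂ : p₂ = p.dropUntil w hws := walk_eq_of_isPath F hp₂ (hp.dropUntil hws)
  have happ : p₁.append p₂ = p := by rw [hq₁, hq₂]; exact p.take_spec hws
  have hL₁ne : L₁ ≠ [] := by intro h; simp [h] at hh₁
  have hL₂ne : L₂ ≠ [] := by intro h; simp [h] at hh₂
  refine ⟨p₁.append p₂, L₁ ++ L₂, by rw [happ]; exact hp, ?_, ?_, ?_, ?_, ?_⟩
  · simp [SimpleGraph.Walk.length_append, hl₁, hl₂]
  · refine List.isChain_append.2 ⟨hc₁, hc₂, ?_⟩
    intro x hx y hy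
    rw [hg₁] at hx; rw [hh₂] at hy
    simp only [Option.mem_some_iff] at hx hy
    subst hx; subst hy; exact hle
  · intro i h
    rw [List.length_append] at h
    by_cases hi : i < L₁.length
    · have hget : (L₁ ++ L₂).get ⟨i, by simp [List.length_append]; omega⟩ = L₁.get ⟨i, hi⟩ := by
        simp [List.get_eq_getElem, List.getElem_append_left hi]
      have hv1 : (p₁.append p₂).getVert i = p₁.getVert i := by
        rw [SimpleGraph.Walk.getVert_append, if_pos (hl₁ ▸ hi)]
      have hv2 : (p₁.append p₂).getVert (i+1) = p₁.getVert (i+1) := by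
        rw [SimpleGraph.Walk.getVert_append]
        by_cases h2 : i + 1 < p₁.length
        · rw [if_pos h2]
        · rw [if_neg h2]
          have he : i + 1 = p₁.length := by rw [← hl₁]; omega
          rw [he, Nat.sub_self, SimpleGraph.Walk.getVert_zero, SimpleGraph.Walk.getVert_length]
      rw [hget, hv1, hv2]; exact hlab₁ i hi
    · push_neg at hi
      have hi2 : i - L₁.length < L₂.length := by omega
      have hget : (L₁ ++ L₂).get ⟨i, by simp [List.length_append]; omega⟩
          = L₂.get ⟨i - L₁.length, hi2⟩ := by
        simp [List.get_eq_getElem, List.getElem_append_right hi]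
      have hv1 : (p₁.append p₂).getVert i = p₂.getVert (i - p₁.length) := by
        rw [SimpleGraph.Walk.getVert_append, if_neg (by omega)]
      have hv2 : (p₁.append p₂).getVert (i+1) = p₂.getVert (i - p₁.length + 1) := by
        rw [SimpleGraph.Walk.getVert_append, if_neg (by omega)]
        congr 1
        omega
      rw [hget, hv1, hv2, ← hl₁]
      exact hlab₂ _ hi2
  · rw [List.head?_append_of_ne_nil _ hL₁ne]; exact hh₁
  · rw [List.getLast?_append_of_ne_nil _ hL₂ne]; exact hg₂

lemma journey_split {V : Type} {F : TemporalForest V} {u v w : V} {dep arr : ℤ}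
    (hj : Journey F u v dep arr)
    (hw : ∃ p : F.G.Walk u v, p.IsPath ∧ w ∈ p.support)
    (huw : u ≠ w) (hwv : w ≠ v) :
    ∃ arr' dep' : ℤ, arr' ≤ dep' ∧ Journey F u w dep arr' ∧ Journey F w v dep' arr := by
  obtain ⟨p, L, hp, hl, hc, hlab, hh, hg⟩ := hj
  obtain ⟨p', hp', hws'⟩ := hw
  have hpp : p = p' := walk_eq_of_isPath F hp hp'
  have hws : w ∈ p.support := hpp ▸ hws'
  set q₁ := p.takeUntil w hws with hq₁
  set q₂ := p.dropUntil w hws with hq₂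
  have happ : q₁.append q₂ = p := p.take_spec hws
  set k := q₁.length with hk
  have hlen : k + q₂.length = p.length := by
    rw [← happ, SimpleGraph.Walk.length_append]
  have hk1 : 0 < k := by
    rcases Nat.eq_zero_or_pos k with h0 | h0
    · exact absurd (SimpleGraph.Walk.eq_of_length_eq_zero h0) huw
    · exact h0
  have hk2 : 0 < q₂.length := by
    rcases Nat.eq_zero_or_pos q₂.length with h0 | h0
    · exact absurd (SimpleGraph.Walk.eq_of_length_eq_zero h0) hwv
    · exact h0
  set L₁ := L.take k with hL₁
  set L₂ := L.drop k with hL₂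
  have hLsplit : L₁ ++ L₂ = L := List.take_append_drop k L
  have hkL : k ≤ L.length := by omega
  have hl₁ : L₁.length = k := by simp [hL₁, hkL]
  have hl₂ : L₂.length = q₂.length := by simp [hL₂]; omega
  have hL₁ne : L₁ ≠ [] := by
    intro h; rw [← List.length_eq_zero_iff] at h; omega
  have hL₂ne : L₂ ≠ [] := by
    intro h; rw [← List.length_eq_zero_iff] at h; omega
  have hchain := List.isChain_append.1 (hLsplit ▸ hc)
  obtain ⟨hc₁, hc₂, hbd⟩ := hchain
  set arr' := L₁.getLast hL₁ne with harr'
  set dep' := L₂.head hL₂ne with hdep'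
  have hg₁ : L₁.getLast? = some arr' := List.getLast?_eq_getLast hL₁ne
  have hh₂ : L₂.head? = some dep' := List.head?_eq_head hL₂ne
  have hle : arr' ≤ dep' := hbd _ hg₁ _ hh₂
  -- getVert relations
  have hv₁ : ∀ j : ℕ, j ≤ k → q₁.getVert j = p.getVert j := by
    intro j hj
    rw [← happ, SimpleGraph.Walk.getVert_append]
    rcases lt_or_eq_of_le hj with h | h
    · rw [if_pos h]
    · subst h
      rw [if_neg (lt_irrefl _), Nat.sub_self, SimpleGraph.Walk.getVert_zero,
        SimpleGraph.Walk.getVert_length]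
  have hv₂ : ∀ j : ℕ, q₂.getVert j = p.getVert (k + j) := by
    intro j
    rw [← happ, SimpleGraph.Walk.getVert_append, if_neg (by omega)]
    congr 1
    omega
  refine ⟨arr', dep', hle, ⟨q₁, L₁, hp.takeUntil hws, by omega, hc₁, ?_, ?_, hg₁⟩,
    ⟨q₂, L₂, hp.dropUntil hws, by omega, hc₂, ?_, hh₂, ?_⟩⟩
  · intro i hlt
    have hik : i < k := by omega
    have hget : L₁.get ⟨i, hlt⟩ = L.get ⟨i, by omega⟩ := by
      simp [hL₁, List.get_eq_getElem, List.getElem_take]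
    rw [hget, hv₁ i (by omega), hv₁ (i+1) (by omega)]
    exact hlab i (by omega)
  · rw [← hLsplit, List.head?_append_of_ne_nil _ hL₁ne] at hh
    exact hh
  · intro i hlt
    have hget : L₂.get ⟨i, hlt⟩ = L.get ⟨k + i, by omega⟩ := by
      simp [hL₂, List.get_eq_getElem, List.getElem_drop]
    rw [hget, hv₂ i, hv₂ (i+1), ← Nat.add_assoc]
    exact hlab (k + i) (by omega)
  · rw [← hLsplit, List.getLast?_append_of_ne_nil _ hL₂ne] at hg
    exact hg

/-- If `w` lies on the unique path between `u` and `v` in the temporal forest `F`,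
then `LD(u, v, t) = LD(u, w, LD(w, v, t))`. -/
theorem ld_composition {V : Type} (F : TemporalForest V) (u v w : V)
    (hw : ∃ p : F.G.Walk u v, p.IsPath ∧ w ∈ p.support) (t : EReal) :
    LD F u v t = LD F u w (LD F w v t) := by
  by_cases huv : u = v
  · subst huv
    obtain ⟨p, hp, hws⟩ := hw
    have : p = SimpleGraph.Walk.nil := (SimpleGraph.Walk.isPath_iff_eq_nil (p := p)).1 hp
    subst this
    simp only [SimpleGraph.Walk.support_nil, List.mem_singleton] at hws
    subst hws
    simp [LD]
  · by_cases huw : u = w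
    · subst huw
      simp [LD, huv]
    · by_cases hwv : w = v
      · subst hwv
        simp [LD, huv]
      · -- main case
        rw [LD, if_neg huv, LD, if_neg huw]
        set A := LD F w v t with hA
        have hAdef : A = sSup {d : EReal |
            ∃ dep arr : ℤ, Journey F w v dep arr ∧ iE arr ≤ t ∧ d = iE dep} := by
          rw [hA, LD, if_neg hwv]
        apply le_antisymm
        · apply sSup_le
          rintro d ⟨dep, arr, hj, harr, rfl⟩
          obtain ⟨arr', dep', hle, h1, h2⟩ := journey_split hj hw huw hwv
          have hdA : iE dep' ≤ A := by
            rw [hAdef]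
            exact le_sSup ⟨dep', arr, h2, harr, rfl⟩
          have harr' : iE arr' ≤ A := le_trans (iE_le_iE.2 hle) hdA
          exact le_sSup ⟨dep, arr', h1, harr', rfl⟩
        · apply sSup_le
          rintro d ⟨dep, arr', h1, hA', rfl⟩
          -- find a journey w → v with departure ≥ arr'
          have hex : ∃ dep' arr : ℤ, Journey F w v dep' arr ∧ iE arr ≤ t ∧ arr' ≤ dep' := by
            by_contra hcon
            push_neg at hcon
            have hub : A ≤ iE (arr' - 1) := by
              rw [hAdef]
              apply sSup_le
              rintro s ⟨dep', arr, hj, harr, rfl⟩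
              have := hcon dep' arr hj harr
              exact iE_le_iE.2 (by omega)
            have : iE arr' ≤ iE (arr' - 1) := le_trans hA' hub
            have := iE_le_iE.1 this
            omega
          obtain ⟨dep', arr, h2, harr, hle⟩ := hex
          have hj : Journey F u v dep arr := journey_trans hw h1 h2 hle
          exact le_sSup ⟨dep, arr, hj, harr, rfl⟩
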